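/- arXiv:1503.05685 — 4 statements merged into one kernel-verified Lean document; each statement's English description precedes it below -/
import Mathlib

section
/- Let Λ be a finite subgroup of (ℝ/ℤ)^{d+1} (identified with [0,1)^{d+1}) such that ht(y) = k for every y ∈ Λ \ {0, x, −x}, where x ∈ Λ is an element with ht(x) = 2k and ht(−x) = k, and k ≥ 2. Then for every y ∈ Λ \ {0, x, −x}, the cardinality of supp(y) is exactly 2k. -/
noncomputable section

/-- Fractional-part addition on `[0,1)`-vectors, modelling the group `(ℝ/ℤ)^n`. -/
def fadd {n : ℕ} (x y : Fin n → ℝ) : Fin n → ℝ := fun i => Int.fract (x i + y i)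

/-- Inverse in `(ℝ/ℤ)^n` on `[0,1)`-representatives. -/
def fneg {n : ℕ} (x : Fin n → ℝ) : Fin n → ℝ := fun i => Int.fract (-(x i))

/-- `j`-fold sum in `(ℝ/ℤ)^n` on `[0,1)`-representatives. -/
def fsmul {n : ℕ} (j : ℤ) (x : Fin n → ℝ) : Fin n → ℝ := fun i => Int.fract ((j : ℝ) * x i)

/-- The height `ht x = ∑ i, x i` of a `[0,1)`-vector. -/
def ht {n : ℕ} (x : Fin n → ℝ) : ℝ := ∑ i, x i

/-- The support `supp x = {i : x i ≠ 0}`. -/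
def supp {n : ℕ} (x : Fin n → ℝ) : Set (Fin n) := {i | x i ≠ 0}

/-- `S ⊆ [0,1)^n` is a subgroup of `(ℝ/ℤ)^n` (in `[0,1)`-coordinates). -/
def IsSubgroupSet {n : ℕ} (S : Set (Fin n → ℝ)) : Prop :=
  (∀ x ∈ S, ∀ i, x i ∈ Set.Ico (0 : ℝ) 1) ∧ 0 ∈ S ∧
    (∀ x ∈ S, ∀ y ∈ S, fadd x y ∈ S) ∧ ∀ x ∈ S, fneg x ∈ S

/-- The subgroup of `(ℝ/ℤ)^n` generated by a set of `[0,1)`-vectors. -/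
def genSet {n : ℕ} (gs : Set (Fin n → ℝ)) : Set (Fin n → ℝ) :=
  ⋂₀ {S | IsSubgroupSet S ∧ gs ⊆ S}

/-! A coordinate `t ∈ [0,1)` of `y` and the matching coordinate `fract (-t)` of `-y` add up to
`0` if `t = 0` and to `1` otherwise, so `ht y + ht (-y) = |supp y|`. Since `-y` is again an element of
`Λ \ {0, x, -x}`, both heights equal `k`. -/

theorem Int.fract_add_fract_neg {R : Type*} [Ring R] [LinearOrder R] [IsStrictOrderedRing R]
    [FloorRing R] (t : R) : Int.fract t + Int.fract (-t) = if Int.fract t = 0 then 0 else 1 := by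
  split_ifs with h
  · rw [h, Int.fract_neg_eq_zero.mpr h, add_zero]
  · rw [Int.fract_neg h, add_sub_cancel]

theorem Int.fract_neg_fract_neg {R : Type*} [Ring R] [LinearOrder R] [IsStrictOrderedRing R]
    [FloorRing R] (t : R) : Int.fract (-Int.fract (-t)) = Int.fract t := by
  rw [show -Int.fract (-t) = t + ⌊-t⌋ by rw [← Int.self_sub_floor]; abel,
    Int.fract_add_intCast]

lemma fneg_zero {n : ℕ} : fneg (0 : Fin n → ℝ) = 0 := by
  funext i
  simp [fneg]

lemma fneg_fneg {n : ℕ} {y : Fin n → ℝ} (hy : ∀ i, y i ∈ Set.Ico (0 : ℝ) 1) :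
    fneg (fneg y) = y := by
  funext i
  rw [fneg, fneg, Int.fract_neg_fract_neg, Int.fract_eq_self.mpr (hy i)]

lemma ht_add_ht_fneg {n : ℕ} {y : Fin n → ℝ} (hy : ∀ i, y i ∈ Set.Ico (0 : ℝ) 1) :
    ht y + ht (fneg y) = (supp y).ncard := by
  have hsupp : supp y = ↑(Finset.univ.filter fun i => y i ≠ 0) := by
    ext i
    simp [supp]
  rw [hsupp, Set.ncard_coe_finset, Finset.card_filter, Nat.cast_sum, ht, ht,
    ← Finset.sum_add_distrib]
  refine Finset.sum_congr rfl fun i _ => ?_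
  have hfract := Int.fract_add_fract_neg (y i)
  rw [Int.fract_eq_self.mpr (hy i)] at hfract
  rw [fneg, hfract]
  split_ifs <;> simp_all

theorem stmt3_general (d k : ℕ) (S : Set (Fin (d+1) → ℝ)) (hS : IsSubgroupSet S)
    (x : Fin (d+1) → ℝ) (hx : x ∈ S)
    (hall : ∀ y ∈ S, y ≠ 0 → y ≠ x → y ≠ fneg x → ht y = k) :
    ∀ y ∈ S, y ≠ 0 → y ≠ x → y ≠ fneg x → (supp y).ncard = 2 * k := by
  obtain ⟨hIco, -, -, hnegS⟩ := hS
  intro y hy hy0 hyx hynx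
  have hyy : fneg (fneg y) = y := fneg_fneg (hIco y hy)
  have hneg : ht (fneg y) = k := by
    refine hall _ (hnegS y hy) ?_ ?_ ?_
    · exact fun h => hy0 (by rw [← hyy, h, fneg_zero])
    · exact fun h => hynx (by rw [← hyy, h])
    · exact fun h => hyx (by rw [← hyy, h, fneg_fneg (hIco x hx)])
  have hsum := ht_add_ht_fneg (hIco y hy)
  rw [hall y hy hy0 hyx hynx, hneg] at hsum
  exact_mod_cast (by linarith : ((supp y).ncard : ℝ) = 2 * k)

theorem stmt3 (d k : ℕ) (hk : 2 ≤ k) (S : Set (Fin (d+1) → ℝ)) (hS : IsSubgroupSet S)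
    (hfin : S.Finite) (x : Fin (d+1) → ℝ) (hx : x ∈ S)
    (hhtx : ht x = 2 * k) (hhtnx : ht (fneg x) = k)
    (hall : ∀ y ∈ S, y ≠ 0 → y ≠ x → y ≠ fneg x → ht y = k) :
    ∀ y ∈ S, y ≠ 0 → y ≠ x → y ≠ fneg x → (supp y).ncard = 2 * k :=
  stmt3_general d k S hS x hx hall
end
end

section
/- Let k ≥ 2 and let x ∈ [0,1)^{d+1} be an element of a finite subgroup of (ℝ/ℤ)^{d+1} whose order is 6, with ht(x) = 2k and ht(jx) = k for j = 2, 3, 4, 5. For j = 1,…,5 let q_j = #{ i : x_i = j/6 }. Then q_1 = q_2 = 0 and q_3 = q_4 = q_5 = k. -/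
noncomputable section

/-! Every coordinate of `x` lies in `{0, 1/6, …, 5/6}`, so grouping the coordinates by value
writes `ht (fsmul j x) = ∑ₘ qₘ · fract (j m / 6)` as a linear form in the counts `qₘ`. The heights of
`x, 2x, 3x, 5x` give four independent linear equations in `q₁, …, q₅` (`q₀` has coefficient zero),
whose unique solution is `q₁ = q₂ = 0`, `q₃ = q₄ = q₅ = k`. -/

open Finset

lemma exists_nat_lt_eq_div_of_fract_mul_eq_zero {n : ℕ} (hn : 0 < n) {t : ℝ}
    (h01 : t ∈ Set.Ico (0 : ℝ) 1) (hfract : Int.fract (n * t) = 0) : ∃ m < n, t = m / n := by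
  obtain ⟨z, hz⟩ := Int.fract_eq_zero_iff.mp hfract
  have hn' : (0 : ℝ) < n := Nat.cast_pos.mpr hn
  have hz0 : 0 ≤ z := by
    have : (0 : ℝ) ≤ z := hz ▸ mul_nonneg hn'.le h01.1
    exact_mod_cast this
  refine ⟨z.toNat, ?_, ?_⟩
  · have : (z : ℝ) < n := hz ▸ mul_lt_of_lt_one_right hn' h01.2
    have : z < n := by exact_mod_cast this
    omega
  · have hcast : ((z.toNat : ℕ) : ℝ) = z := by exact_mod_cast Int.toNat_of_nonneg hz0
    rw [hcast, hz]
    field_simp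

lemma sum_comp_eq_sum_range_ncard {ι : Type*} [Fintype ι] {n : ℕ} {x : ι → ℝ}
    (hx : ∀ i, ∃ m < n, x i = m / n) (g : ℝ → ℝ) :
    ∑ i, g (x i) = ∑ m ∈ range n, ({i | x i = m / n}.ncard : ℝ) * g (m / n) := by
  classical
  have hmaps : ∀ i ∈ (univ : Finset ι), x i ∈ (range n).image fun m : ℕ => (m : ℝ) / n := by
    intro i _
    obtain ⟨m, hm, hxi⟩ := hx i
    exact mem_image.mpr ⟨m, mem_range.mpr hm, hxi.symm⟩
  rw [← sum_fiberwise_of_maps_to' hmaps, sum_image]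
  · refine sum_congr rfl fun m _ => ?_
    rw [sum_const, nsmul_eq_mul, Set.ncard_eq_toFinset_card', Set.toFinset_ofPred]
  · intro a ha b _ hab
    have hn : (n : ℝ) ≠ 0 := Nat.cast_ne_zero.mpr (by simp at ha; omega)
    simpa [hn] using hab

theorem stmt6_general (d k : ℕ) (S : Set (Fin (d+1) → ℝ)) (hS : IsSubgroupSet S)
    (x : Fin (d+1) → ℝ) (hx : x ∈ S) (hord6 : fsmul 6 x = 0)
    (h1 : ht x = 2 * k) (h2 : ht (fsmul 2 x) = k) (h3 : ht (fsmul 3 x) = k)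
    (h5 : ht (fsmul 5 x) = k) :
    {i | x i = 1/6}.ncard = 0 ∧ {i | x i = 1/3}.ncard = 0 ∧
      {i | x i = 1/2}.ncard = k ∧ {i | x i = 2/3}.ncard = k ∧ {i | x i = 5/6}.ncard = k := by
  have hsixths : ∀ i, ∃ m < 6, x i = (m : ℕ) / (6 : ℕ) := fun i =>
    exists_nat_lt_eq_div_of_fract_mul_eq_zero (by norm_num) (hS.1 x hx i)
      (by exact_mod_cast congrFun hord6 i)
  have hsum := sum_comp_eq_sum_range_ncard hsixths
  have e1 := (hsum id).symm.trans h1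
  have e2 := (hsum fun t => Int.fract ((2 : ℤ) * t)).symm.trans h2
  have e3 := (hsum fun t => Int.fract ((3 : ℤ) * t)).symm.trans h3
  have e5 := (hsum fun t => Int.fract ((5 : ℤ) * t)).symm.trans h5
  norm_num [sum_range_succ] at e1 e2 e3 e5
  refine ⟨?_, ?_, ?_, ?_, ?_⟩ <;> rw [← Nat.cast_inj (R := ℝ)] <;> push_cast <;> linarith

theorem stmt6 (d k : ℕ) (hk : 2 ≤ k) (S : Set (Fin (d+1) → ℝ)) (hS : IsSubgroupSet S)
    (hfin : S.Finite) (x : Fin (d+1) → ℝ) (hx : x ∈ S)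
    (hord6 : fsmul 6 x = 0) (hmin : ∀ j : ℕ, 0 < j → j < 6 → fsmul j x ≠ 0)
    (h1 : ht x = 2 * k) (h2 : ht (fsmul 2 x) = k) (h3 : ht (fsmul 3 x) = k)
    (h4 : ht (fsmul 4 x) = k) (h5 : ht (fsmul 5 x) = k) :
    {i | x i = 1/6}.ncard = 0 ∧ {i | x i = 1/3}.ncard = 0 ∧
      {i | x i = 1/2}.ncard = k ∧ {i | x i = 2/3}.ncard = k ∧ {i | x i = 5/6}.ncard = k :=
  stmt6_general d k S hS x hx hord6 h1 h2 h3 h5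
end
end

section
/- Let k ≥ 2 and let Λ ⊆ [0,1)^{3k} be the cyclic subgroup of (ℝ/ℤ)^{3k} generated by g = (1/6,…,1/6, 1/3,…,1/3, 1/2,…,1/2) with k coordinates each of 1/6, 1/3, 1/2. Then Λ has order 6, and the heights of its elements are: ht(0)=0, ht(g)=k, ht(2g)=k, ht(3g)=k, ht(4g)=k, ht(5g)=2k. Hence the corresponding lattice simplex has h*-polynomial 1 + 4t^k + t^{2k}. -/
/-! Since `6 • g = 0` and `g` has a coordinate `1/6`, the subgroup generated by `g` is
`{0, g, …, 5 • g}` with six distinct elements. The multiple `j • g` has blocks of `k` coordinates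
`fract (j/6)`, `fract (j/3)`, `fract (j/2)`, so its height is `k` times their sum. -/

noncomputable section

section CyclicSubgroup

variable {n : ℕ}

lemma fadd_fsmul (a b : ℤ) (x : Fin n → ℝ) : fadd (fsmul a x) (fsmul b x) = fsmul (a + b) x := by
  funext i
  simp only [fadd, fsmul]
  refine Int.fract_eq_fract.mpr ⟨-⌊(a : ℝ) * x i⌋ - ⌊(b : ℝ) * x i⌋, ?_⟩
  simp only [Int.fract]
  push_cast
  ring

lemma fneg_fsmul (a : ℤ) (x : Fin n → ℝ) : fneg (fsmul a x) = fsmul (-a) x := by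
  funext i
  simp only [fneg, fsmul]
  refine Int.fract_eq_fract.mpr ⟨⌊(a : ℝ) * x i⌋, ?_⟩
  simp only [Int.fract]
  push_cast
  ring

lemma fsmul_zero_left (x : Fin n → ℝ) : fsmul 0 x = 0 := by
  funext i
  simp [fsmul]

lemma fsmul_one_of_mem_Ico {x : Fin n → ℝ} (hx : ∀ i, x i ∈ Set.Ico (0 : ℝ) 1) :
    fsmul 1 x = x := by
  funext i
  simpa [fsmul] using Int.fract_eq_self.mpr (hx i)

lemma fsmul_emod {d : ℤ} {x : Fin n → ℝ} (hx : ∀ i, ∃ z : ℤ, (d : ℝ) * x i = z) (a : ℤ) :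
    fsmul a x = fsmul (a % d) x := by
  funext i
  obtain ⟨z, hz⟩ := hx i
  refine Int.fract_eq_fract.mpr ⟨a / d * z, ?_⟩
  have hdiv : ((a % d : ℤ) : ℝ) + d * (a / d : ℤ) = a := by
    exact_mod_cast Int.emod_add_mul_ediv a d
  push_cast
  linear_combination (-x i) * hdiv + ((a / d : ℤ) : ℝ) * hz

lemma isSubgroupSet_range_fsmul (x : Fin n → ℝ) :
    IsSubgroupSet (Set.range fun a : ℤ => fsmul a x) := by
  refine ⟨?_, ⟨0, fsmul_zero_left x⟩, ?_, ?_⟩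
  · rintro _ ⟨a, rfl⟩ i
    exact ⟨Int.fract_nonneg _, Int.fract_lt_one _⟩
  · rintro _ ⟨a, rfl⟩ _ ⟨b, rfl⟩
    exact ⟨a + b, (fadd_fsmul a b x).symm⟩
  · rintro _ ⟨a, rfl⟩
    exact ⟨-a, (fneg_fsmul a x).symm⟩

lemma IsSubgroupSet.fsmul_mem {S : Set (Fin n → ℝ)} (hS : IsSubgroupSet S) {x : Fin n → ℝ}
    (hx : x ∈ S) (a : ℤ) : fsmul a x ∈ S := by
  obtain ⟨hIco, hzero, hadd, hneg⟩ := hS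
  have hx1 : fsmul 1 x = x := fsmul_one_of_mem_Ico (hIco x hx)
  induction a using Int.induction_on with
  | zero => rwa [fsmul_zero_left]
  | succ a ih => rw [← fadd_fsmul, hx1]; exact hadd _ ih _ hx
  | pred a ih =>
    rw [sub_eq_add_neg, ← fadd_fsmul, ← fneg_fsmul 1, hx1]
    exact hadd _ ih _ (hneg _ hx)

lemma genSet_singleton {x : Fin n → ℝ} (hx : ∀ i, x i ∈ Set.Ico (0 : ℝ) 1) :
    genSet {x} = Set.range fun a : ℤ => fsmul a x := by
  refine subset_antisymm (Set.sInter_subset_of_mem ⟨isSubgroupSet_range_fsmul x, ?_⟩) ?_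
  · exact Set.singleton_subset_iff.mpr ⟨1, fsmul_one_of_mem_Ico hx⟩
  · rintro _ ⟨a, rfl⟩ S ⟨hS, hxS⟩
    exact hS.fsmul_mem (hxS rfl) a

lemma range_fsmul_eq_range_fin {d : ℕ} [NeZero d] {x : Fin n → ℝ}
    (hx : ∀ i, ∃ z : ℤ, (d : ℝ) * x i = z) :
    (Set.range fun a : ℤ => fsmul a x) = Set.range fun m : Fin d => fsmul (m : ℕ) x := by
  refine subset_antisymm ?_ fun _ ⟨m, hm⟩ => ⟨_, hm⟩
  rintro _ ⟨a, rfl⟩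
  have hd : (0 : ℤ) < d := by exact_mod_cast NeZero.pos d
  have hlt := Int.emod_lt_of_pos a hd
  refine ⟨⟨(a % d).toNat, by omega⟩, ?_⟩
  simp only [fsmul_emod (d := d) (by exact_mod_cast hx) a]
  congr 1
  simp [Int.emod_nonneg a hd.ne']

lemma injective_fsmul_fin {d : ℕ} {x : Fin n → ℝ} (i : Fin n) (hi : x i = 1 / d) :
    Function.Injective fun m : Fin d => fsmul (m : ℕ) x := by
  intro m m' h
  have hm := congrFun h i
  simp only [fsmul, hi, Int.cast_natCast, mul_one_div,
    Int.fract_div_natCast_eq_div_natCast_mod, Nat.mod_eq_of_lt m.isLt,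
    Nat.mod_eq_of_lt m'.isLt] at hm
  have hd : (d : ℝ) ≠ 0 := by have := m.pos; positivity
  exact Fin.ext (by exact_mod_cast (div_left_inj' hd).mp hm)

lemma ncard_sep_range_of_injective {α β : Type*} {f : α → β} (hf : Function.Injective f)
    (p : β → Prop) : {y ∈ Set.range f | p y}.ncard = {a | p (f a)}.ncard := by
  rw [← Set.ncard_image_of_injective _ hf]
  congr 1
  ext y
  constructor
  · rintro ⟨⟨a, rfl⟩, hp⟩
    exact ⟨a, hp, rfl⟩
  · rintro ⟨a, hp, rfl⟩
    exact ⟨⟨a, rfl⟩, hp⟩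

end CyclicSubgroup

section BlockVectors

def blockVec (k : ℕ) (p q r : ℝ) : Fin (3 * k) → ℝ :=
  fun i => if i.val < k then p else if i.val < 2 * k then q else r

lemma fsmul_blockVec (a : ℤ) (k : ℕ) (p q r : ℝ) :
    fsmul a (blockVec k p q r) =
      blockVec k (Int.fract (a * p)) (Int.fract (a * q)) (Int.fract (a * r)) := by
  funext i
  simp only [fsmul, blockVec]
  split_ifs <;> rfl

lemma ht_blockVec (k : ℕ) (p q r : ℝ) : ht (blockVec k p q r) = k * p + k * q + k * r := by
  set f : ℕ → ℝ := fun i => if i < k then p else if i < 2 * k then q else r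
  have h1 : ∀ i ∈ Finset.range k, f i = p := fun i hi => by
    simp_all [f]
  have h2 : ∀ i ∈ Finset.range k, f (k + i) = q := fun i hi => by
    simp only [Finset.mem_range] at hi
    simp only [f, if_neg (show ¬k + i < k by omega), if_pos (show k + i < 2 * k by omega)]
  have h3 : ∀ i ∈ Finset.range k, f (k + k + i) = r := fun i _ => by
    simp only [f, if_neg (show ¬k + k + i < k by omega),
      if_neg (show ¬k + k + i < 2 * k by omega)]
  change ∑ i : Fin (3 * k), f i = _
  rw [Fin.sum_univ_eq_sum_range f, show 3 * k = k + k + k by ring, Finset.sum_range_add,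
    Finset.sum_range_add, Finset.sum_congr rfl h1, Finset.sum_congr rfl h2,
    Finset.sum_congr rfl h3]
  simp

lemma ht_fsmul_blockVec_sixths (k : ℕ) (m : Fin 6) :
    ht (fsmul (m : ℕ) (blockVec k (1 / 6) (1 / 3) (1 / 2))) =
      (![0, 1, 1, 1, 1, 2] m : ℕ) * k := by
  rw [fsmul_blockVec, ht_blockVec]
  fin_cases m <;> norm_num <;> ring

end BlockVectors

theorem stmt11 (k : ℕ) (hk : 2 ≤ k) (g : Fin (3*k) → ℝ)
    (hg : g = fun i => if i.val < k then 1/6 else if i.val < 2*k then 1/3 else 1/2) :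
    (genSet {g}).ncard = 6 ∧
    ht (fsmul 0 g) = 0 ∧ ht (fsmul 1 g) = k ∧ ht (fsmul 2 g) = k ∧
    ht (fsmul 3 g) = k ∧ ht (fsmul 4 g) = k ∧ ht (fsmul 5 g) = 2 * k ∧
    {x ∈ genSet {g} | ht x = 0}.ncard = 1 ∧
    {x ∈ genSet {g} | ht x = (k : ℝ)}.ncard = 4 ∧
    {x ∈ genSet {g} | ht x = (2 * k : ℝ)}.ncard = 1 := by
  replace hg : g = blockVec k (1 / 6) (1 / 3) (1 / 2) := hg
  have hk0 : (k : ℝ) ≠ 0 := by positivity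
  have hIco : ∀ i, g i ∈ Set.Ico (0 : ℝ) 1 := fun i => by
    rw [hg]; unfold blockVec; split_ifs <;> norm_num
  have htorsion : ∀ i, ∃ z : ℤ, ((6 : ℕ) : ℝ) * g i = z := fun i => by
    rw [hg]; unfold blockVec; split_ifs
    exacts [⟨1, by norm_num⟩, ⟨2, by norm_num⟩, ⟨3, by norm_num⟩]
  have hΛ := (genSet_singleton hIco).trans (range_fsmul_eq_range_fin htorsion)
  have hinj : Function.Injective fun m : Fin 6 => fsmul (m : ℕ) g :=
    injective_fsmul_fin ⟨0, by omega⟩ (by simp [hg, blockVec]; omega)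
  have hheight : ∀ m : Fin 6, ht (fsmul (m : ℕ) g) = (![0, 1, 1, 1, 1, 2] m : ℕ) * k :=
    hg ▸ ht_fsmul_blockVec_sixths k
  have hlevel (j : ℕ) (c : ℝ) (hc : c = j * k) : {x ∈ genSet {g} | ht x = c}.ncard =
      (Finset.univ.filter fun m : Fin 6 => ![0, 1, 1, 1, 1, 2] m = j).card := by
    simp only [hc, hΛ, ncard_sep_range_of_injective hinj, hheight, mul_left_inj' hk0,
      Nat.cast_inj, Set.ncard_eq_toFinset_card', Set.toFinset_ofPred]
  refine ⟨?_, by simpa using hheight 0, by simpa using hheight 1, by simpa using hheight 2,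
    by simpa using hheight 3, by simpa using hheight 4, by simpa using hheight 5,
    (hlevel 0 0 (by simp)).trans (by decide), (hlevel 1 k (by simp)).trans (by decide),
    (hlevel 2 (2 * k) (by simp)).trans (by decide)⟩
  rw [hΛ, Set.ncard_range_of_injective hinj, Nat.card_fin]
end
end

section
/- For integers k ≥ 2, m ≥ 3 suppose there exists a d-dimensional lattice simplex, not a lattice pyramid, with h*-polynomial 1 + (m−2)t^k + t^{2k}. If the unique element x of height 2k in Λ_Δ has order 2, then d = 4k − 1, and otherwise (order 3, 4, or 6) d = 3k − 1. In particular d ∈ {3k−1, 4k−1}. -/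
/-!
`Λ_Δ` is finite, so by the shape of `h*` every nonzero element has height `k`, except `x`,
of height `2k`. For `y` of height `k`, the element `x - y` is nonzero and different from `x`,
hence also of height `k`; since `ht y + ht (x - y) = ht x + #{i | x i < y i}`, this forces
`y ≤ x` coordinatewise. As `Δ` is not a pyramid, every coordinate of `x` is then positive, so
`-x = 1 - x` coordinatewise and `ht x + ht (-x) = d + 1`. Either `-x = x`, i.e. `2x = 0`, and
`d + 1 = 4k`, or `-x` has height `k` and `d + 1 = 3k`.
-/

noncomputable section

/-- The group `Λ_Δ` of a lattice simplex with vertices `v 0, …, v d`. -/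
def simplexGroup {d : ℕ} (v : Fin (d+1) → Fin d → ℤ) : Set (Fin (d+1) → ℝ) :=
  {x | (∀ i, x i ∈ Set.Ico (0 : ℝ) 1) ∧
    (∀ j : Fin d, ∃ z : ℤ, ∑ i, x i * (v i j : ℝ) = (z : ℝ)) ∧
    (∃ z : ℤ, ∑ i, x i = (z : ℝ))}

open Finset

section Group

variable {d : ℕ} {v : Fin (d+1) → Fin d → ℤ}

theorem fract_mem_simplexGroup {a : Fin (d+1) → ℝ}
    (hv : ∀ j, ∃ z : ℤ, ∑ i, a i * (v i j : ℝ) = z) (hsum : ∃ z : ℤ, ∑ i, a i = z) :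
    (fun i => Int.fract (a i)) ∈ simplexGroup v := by
  refine ⟨fun i => ⟨Int.fract_nonneg _, Int.fract_lt_one _⟩, fun j => ?_, ?_⟩
  · obtain ⟨z, hz⟩ := hv j
    refine ⟨z - ∑ i, ⌊a i⌋ * v i j, ?_⟩
    simp only [Int.fract, sub_mul, sum_sub_distrib, hz]
    push_cast
    rfl
  · obtain ⟨z, hz⟩ := hsum
    refine ⟨z - ∑ i, ⌊a i⌋, ?_⟩
    simp only [Int.fract, sum_sub_distrib, hz]
    push_cast
    rfl

theorem fract_sub_mem_simplexGroup {x y : Fin (d+1) → ℝ}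
    (hx : x ∈ simplexGroup v) (hy : y ∈ simplexGroup v) :
    (fun i => Int.fract (x i - y i)) ∈ simplexGroup v := by
  obtain ⟨-, hxv, ⟨zx, hzx⟩⟩ := hx
  obtain ⟨-, hyv, ⟨zy, hzy⟩⟩ := hy
  refine fract_mem_simplexGroup (fun j => ?_) ⟨zx - zy, by simp [sum_sub_distrib, hzx, hzy]⟩
  obtain ⟨zx, hzx⟩ := hxv j
  obtain ⟨zy, hzy⟩ := hyv j
  exact ⟨zx - zy, by simp [sub_mul, sum_sub_distrib, hzx, hzy]⟩

theorem fneg_mem_simplexGroup {x : Fin (d+1) → ℝ} (hx : x ∈ simplexGroup v) :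
    fneg x ∈ simplexGroup v := by
  obtain ⟨-, hxv, ⟨z, hz⟩⟩ := hx
  refine fract_mem_simplexGroup (fun j => ?_) ⟨-z, by simp [sum_neg_distrib, hz]⟩
  obtain ⟨z, hz⟩ := hxv j
  exact ⟨-z, by simp [neg_mul, sum_neg_distrib, hz]⟩

theorem eq_zero_of_ht_eq_zero {x : Fin (d+1) → ℝ} (hx : x ∈ simplexGroup v) (h : ht x = 0) :
    x = 0 := by
  funext i
  exact (sum_eq_zero_iff_of_nonneg fun i _ => (hx.1 i).1).mp h i (mem_univ i)

theorem exists_ht_eq_natCast {x : Fin (d+1) → ℝ} (hx : x ∈ simplexGroup v) :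
    ∃ n : ℕ, ht x = n := by
  obtain ⟨z, hz⟩ := hx.2.2
  have hz0 : (0 : ℝ) ≤ z := hz ▸ sum_nonneg fun i _ => (hx.1 i).1
  lift z to ℕ using by exact_mod_cast hz0
  exact ⟨z, hz⟩

end Group

section Finite

theorem finite_range_intCast_inter_Icc (a b : ℝ) :
    (Set.range ((↑) : ℤ → ℝ) ∩ Set.Icc a b).Finite := by
  rw [← Set.image_preimage_eq_range_inter, Int.preimage_Icc]
  exact (Set.finite_Icc _ _).image _

theorem abs_sum_mul_le_sum_abs {n : ℕ} {x : Fin n → ℝ} (hx : ∀ i, x i ∈ Set.Ico (0 : ℝ) 1)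
    (w : Fin n → ℝ) : |∑ i, x i * w i| ≤ ∑ i, |w i| :=
  (abs_sum_le_sum_abs _ _).trans <| sum_le_sum fun i _ => by
    rw [abs_mul, abs_of_nonneg (hx i).1]
    exact mul_le_of_le_one_left (abs_nonneg _) (hx i).2.le

variable {d : ℕ} {v : Fin (d+1) → Fin d → ℤ}

def homogeneousMap (v : Fin (d+1) → Fin d → ℤ) (x : Fin (d+1) → ℝ) : (Fin d → ℝ) × ℝ :=
  (fun j => ∑ i, x i * (v i j : ℝ), ∑ i, x i)

theorem homogeneousMap_injective (hv : AffineIndependent ℝ (fun i => fun j => ((v i j : ℝ)))) :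
    Function.Injective (homogeneousMap v) := by
  intro a b hab
  simp only [homogeneousMap, Prod.mk.injEq, funext_iff] at hab
  have hzero := affineIndependent_iff.mp hv univ (fun i => a i - b i)
    (by rw [sum_sub_distrib, hab.2, sub_self])
    (by
      funext j
      simp only [Finset.sum_apply, Pi.smul_apply, smul_eq_mul, Pi.zero_apply, sub_mul,
        sum_sub_distrib, hab.1 j, sub_self])
  funext i
  exact sub_eq_zero.mp (hzero i (mem_univ i))

theorem simplexGroup_finite (hv : AffineIndependent ℝ (fun i => fun j => ((v i j : ℝ)))) :
    (simplexGroup v).Finite := by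
  refine Set.Finite.of_finite_image ?_ (homogeneousMap_injective hv).injOn
  refine ((Set.Finite.pi fun j => finite_range_intCast_inter_Icc
    (-∑ i, |(v i j : ℝ)|) (∑ i, |(v i j : ℝ)|)).prod
      (finite_range_intCast_inter_Icc 0 (d+1))).subset ?_
  rintro _ ⟨x, ⟨hx, hxv, ⟨z, hz⟩⟩, rfl⟩
  simp only [homogeneousMap, Set.mem_prod, Set.mem_pi, Set.mem_univ, forall_const]
  refine ⟨fun j => ?_, ⟨z, hz.symm⟩, ?_, ?_⟩
  · obtain ⟨zj, hzj⟩ := hxv j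
    exact ⟨⟨zj, hzj.symm⟩, abs_le.mp (abs_sum_mul_le_sum_abs hx _)⟩
  · exact sum_nonneg fun i _ => (hx i).1
  · simpa using sum_le_sum fun i (_ : i ∈ univ) => (hx i).2.le

end Finite

section Fract

theorem add_fract_sub {a b : ℝ} (ha : a ∈ Set.Ico (0 : ℝ) 1) (hb : b ∈ Set.Ico (0 : ℝ) 1) :
    b + Int.fract (a - b) = a + if a < b then 1 else 0 := by
  split_ifs with hab
  · have hfract : Int.fract (a - b) = a - b + 1 :=
      Int.fract_eq_iff.mpr ⟨by linarith [ha.1, hb.2], by linarith [hb.1], -1, by push_cast; ring⟩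
    rw [hfract]
    ring
  · rw [Int.fract_eq_self.mpr ⟨by linarith, by linarith [ha.2, hb.1]⟩]
    ring

theorem ht_add_ht_fract_sub {n : ℕ} {x y : Fin n → ℝ} (hx : ∀ i, x i ∈ Set.Ico (0 : ℝ) 1)
    (hy : ∀ i, y i ∈ Set.Ico (0 : ℝ) 1) :
    ht y + ht (fun i => Int.fract (x i - y i)) = ht x + #{i | x i < y i} := by
  simp only [ht, ← sum_add_distrib, add_fract_sub (hx _) (hy _), ← sum_boole]

theorem fneg_apply_of_mem_Ioo {n : ℕ} {x : Fin n → ℝ} {i : Fin n} (hx : x i ∈ Set.Ioo (0 : ℝ) 1) :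
    fneg x i = 1 - x i := by
  have hfract : Int.fract (x i) = x i := Int.fract_eq_self.mpr ⟨hx.1.le, hx.2⟩
  rw [fneg, Int.fract_neg (hfract.symm ▸ hx.1.ne'), hfract]

theorem ht_add_ht_fneg_s15 {n : ℕ} {x : Fin n → ℝ} (hx : ∀ i, x i ∈ Set.Ioo (0 : ℝ) 1) :
    ht x + ht (fneg x) = n := by
  simp [ht, fneg_apply_of_mem_Ioo (hx _)]

theorem fract_neg_eq_self_iff {t : ℝ} (ht : t ∈ Set.Ico (0 : ℝ) 1) :
    Int.fract (-t) = t ↔ Int.fract (2 * t) = 0 := by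
  rw [Int.fract_eq_iff, Int.fract_eq_zero_iff]
  exact ⟨fun ⟨_, _, z, hz⟩ => ⟨-z, by push_cast; linarith⟩,
    fun ⟨z, hz⟩ => ⟨ht.1, ht.2, -z, by push_cast; linarith⟩⟩

theorem fneg_eq_self_iff {n : ℕ} {x : Fin n → ℝ} (hx : ∀ i, x i ∈ Set.Ico (0 : ℝ) 1) :
    fneg x = x ↔ fsmul 2 x = 0 := by
  simp only [funext_iff, fneg, fsmul, Pi.zero_apply, Int.cast_ofNat, fract_neg_eq_self_iff (hx _)]

end Fract

section HeightSpectrum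

variable {d k : ℕ} {v : Fin (d+1) → Fin d → ℤ} {x y : Fin (d+1) → ℝ}

theorem ht_eq_zero_or_eq_or_eq_two_mul (hfin : (simplexGroup v).Finite)
    (hstar : ∀ n : ℕ, n ≠ 0 → n ≠ k → n ≠ 2 * k →
      {x ∈ simplexGroup v | ht x = (n : ℝ)}.ncard = 0)
    (hy : y ∈ simplexGroup v) : ht y = 0 ∨ ht y = k ∨ ht y = 2 * k := by
  obtain ⟨n, hn⟩ := exists_ht_eq_natCast hy
  have hne : {x ∈ simplexGroup v | ht x = (n : ℝ)}.ncard ≠ 0 :=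
    Set.ncard_ne_zero_of_mem ⟨hy, hn⟩ (hfin.subset fun _ hz => hz.1)
  rw [hn]
  by_contra! hcon
  exact hne (hstar n (by exact_mod_cast hcon.1) (by exact_mod_cast hcon.2.1)
    (by exact_mod_cast hcon.2.2))

theorem ht_eq_of_ne_zero_of_ne
    (hheights : ∀ y ∈ simplexGroup v, ht y = 0 ∨ ht y = k ∨ ht y = 2 * k)
    (hxuniq : ∀ y ∈ simplexGroup v, ht y = 2 * k → y = x)
    (hy : y ∈ simplexGroup v) (hy0 : y ≠ 0) (hyx : y ≠ x) : ht y = k := by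
  rcases hheights y hy with h | h | h
  · exact absurd (eq_zero_of_ht_eq_zero hy h) hy0
  · exact h
  · exact absurd (hxuniq y hy h) hyx

theorem le_of_ht_eq (hk : k ≠ 0)
    (hheights : ∀ y ∈ simplexGroup v, ht y = 0 ∨ ht y = k ∨ ht y = 2 * k)
    (hx : x ∈ simplexGroup v) (hhtx : ht x = 2 * k)
    (hxuniq : ∀ y ∈ simplexGroup v, ht y = 2 * k → y = x)
    (hy : y ∈ simplexGroup v) (hyk : ht y = k) (i : Fin (d+1)) : y i ≤ x i := by
  set w : Fin (d+1) → ℝ := fun i => Int.fract (x i - y i)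
  have hw : w ∈ simplexGroup v := fract_sub_mem_simplexGroup hx hy
  have hsum := ht_add_ht_fract_sub hx.1 hy.1
  have hkpos : (0 : ℝ) < k := by positivity
  have hwx : w ≠ x := by
    intro hwx
    have hy0 : y = 0 := funext fun i => by
      have hi : y i + w i = _ := add_fract_sub (hx.1 i) (hy.1 i)
      rw [hwx] at hi
      split_ifs at hi <;> simp only [Pi.zero_apply] <;> linarith [(hy.1 i).2]
    have hy0_ht : ht y = 0 := by simp [hy0, ht]
    exact hk (by exact_mod_cast hyk.symm.trans hy0_ht)
  have hwk : ht w = k := by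
    rcases hheights w hw with h | h | h
    · rw [hyk, h, hhtx] at hsum
      linarith [(#{i | x i < y i} : ℕ).cast_nonneg (α := ℝ)]
    · exact h
    · exact absurd (hxuniq w hw h) hwx
  rw [hyk, hwk, hhtx] at hsum
  have hcard : #{i | x i < y i} = 0 := by exact_mod_cast (by linarith : (#{i | x i < y i} : ℝ) = 0)
  exact not_lt.mp (filter_eq_empty_iff.mp (card_eq_zero.mp hcard) (mem_univ i))

theorem pos_of_not_isPyramid (hk : k ≠ 0)
    (hheights : ∀ y ∈ simplexGroup v, ht y = 0 ∨ ht y = k ∨ ht y = 2 * k)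
    (hx : x ∈ simplexGroup v) (hhtx : ht x = 2 * k)
    (hxuniq : ∀ y ∈ simplexGroup v, ht y = 2 * k → y = x)
    (hnotpyramid : ¬ ∃ i : Fin (d+1), ∀ x ∈ simplexGroup v, x i = 0) (i : Fin (d+1)) :
    0 < x i := by
  push Not at hnotpyramid
  obtain ⟨y, hy, hyi⟩ := hnotpyramid i
  have hyi_pos : 0 < y i := (hy.1 i).1.lt_of_ne' hyi
  by_cases hyx : y = x
  · exact hyx ▸ hyi_pos
  · have hy0 : y ≠ 0 := fun h => hyi (h ▸ rfl)
    have hyk := ht_eq_of_ne_zero_of_ne hheights hxuniq hy hy0 hyx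
    exact hyi_pos.trans_le (le_of_ht_eq hk hheights hx hhtx hxuniq hy hyk i)

end HeightSpectrum

theorem stmt15_general (k m d : ℕ) (hk : 2 ≤ k)
    (v : Fin (d+1) → Fin d → ℤ)
    (hsimplex : AffineIndependent ℝ (fun i => fun j => ((v i j : ℝ))))
    (hnotpyramid : ¬ ∃ i : Fin (d+1), ∀ x ∈ simplexGroup v, x i = 0)
    (hstar : ∀ i : ℕ, {x ∈ simplexGroup v | ht x = (i : ℝ)}.ncard =
      if i = 0 then 1 else if i = k then m - 2 else if i = 2 * k then 1 else 0)
    (x : Fin (d+1) → ℝ) (hx : x ∈ simplexGroup v) (hhtx : ht x = 2 * k)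
    (hxuniq : ∀ y ∈ simplexGroup v, ht y = (2 * k : ℝ) → y = x) :
    (fsmul 2 x = 0 → d = 4 * k - 1) ∧ (fsmul 2 x ≠ 0 → d = 3 * k - 1) ∧
      (d = 3 * k - 1 ∨ d = 4 * k - 1) := by
  have hk0 : k ≠ 0 := by omega
  have hheights : ∀ y ∈ simplexGroup v, ht y = 0 ∨ ht y = k ∨ ht y = 2 * k :=
    fun _ => ht_eq_zero_or_eq_or_eq_two_mul (simplexGroup_finite hsimplex)
      fun n h0 hnk h2k => by rw [hstar, if_neg h0, if_neg hnk, if_neg h2k]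
  have hxIoo : ∀ i, x i ∈ Set.Ioo (0 : ℝ) 1 := fun i =>
    ⟨pos_of_not_isPyramid hk0 hheights hx hhtx hxuniq hnotpyramid i, (hx.1 i).2⟩
  have hdim := ht_add_ht_fneg_s15 hxIoo
  have hneg0 : fneg x ≠ 0 := fun h => by
    have h0 := fneg_apply_of_mem_Ioo (hxIoo 0)
    rw [h] at h0
    linarith [(hxIoo 0).2, show (0 : Fin (d+1) → ℝ) 0 = 0 from rfl]
  have hcaseA : fsmul 2 x = 0 → d = 4 * k - 1 := fun h => by
    rw [(fneg_eq_self_iff hx.1).mpr h, hhtx] at hdim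
    have hd : ((d + 1 : ℕ) : ℝ) = (4 * k : ℕ) := by push_cast at hdim ⊢; linarith
    have := Nat.cast_injective hd
    omega
  have hcaseB : fsmul 2 x ≠ 0 → d = 3 * k - 1 := fun h => by
    have hnegx : fneg x ≠ x := mt (fneg_eq_self_iff hx.1).mp h
    rw [ht_eq_of_ne_zero_of_ne hheights hxuniq (fneg_mem_simplexGroup hx) hneg0 hnegx, hhtx] at hdim
    have hd : ((d + 1 : ℕ) : ℝ) = (3 * k : ℕ) := by push_cast at hdim ⊢; linarith
    have := Nat.cast_injective hd
    omega
  refine ⟨hcaseA, hcaseB, ?_⟩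
  by_cases h : fsmul 2 x = 0
  exacts [Or.inr (hcaseA h), Or.inl (hcaseB h)]

theorem stmt15 (k m d : ℕ) (hk : 2 ≤ k) (hm : 3 ≤ m)
    (v : Fin (d+1) → Fin d → ℤ)
    (hsimplex : AffineIndependent ℝ (fun i => fun j => ((v i j : ℝ))))
    (hnotpyramid : ¬ ∃ i : Fin (d+1), ∀ x ∈ simplexGroup v, x i = 0)
    (hstar : ∀ i : ℕ, {x ∈ simplexGroup v | ht x = (i : ℝ)}.ncard =
      if i = 0 then 1 else if i = k then m - 2 else if i = 2 * k then 1 else 0)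
    (x : Fin (d+1) → ℝ) (hx : x ∈ simplexGroup v) (hhtx : ht x = 2 * k)
    (hxuniq : ∀ y ∈ simplexGroup v, ht y = (2 * k : ℝ) → y = x) :
    (fsmul 2 x = 0 → d = 4 * k - 1) ∧ (fsmul 2 x ≠ 0 → d = 3 * k - 1) ∧
      (d = 3 * k - 1 ∨ d = 4 * k - 1) :=
  stmt15_general k m d hk v hsimplex hnotpyramid hstar x hx hhtx hxuniq
end
end
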